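/- arXiv:2503.14886 — 3 statements merged into one kernel-verified Lean document; each statement's English description precedes it below -/
import Mathlib

section
/- Under the change of coordinates given by the spherical projection z1 = |x|, z_i = x_i/(x1+|x|) (i=2,3), the Euclidean Laplacian of a smooth function phi on the hemispherical shell transforms as: Delta_x phi = d^2(phi~)/dz1^2 + ((1+|z'|^2)^2/(4 z1^2)) * (d^2(phi~)/dz2^2 + d^2(phi~)/dz3^2) + (2/z1) d(phi~)/dz1, where phi~(z) = phi(S^{-1}(z)). -/
noncomputable section

/-- Euclidean norm of a point of `ℝ × ℝ × ℝ`. -/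
def sphNorm (x : ℝ × ℝ × ℝ) : ℝ := Real.sqrt (x.1 ^ 2 + x.2.1 ^ 2 + x.2.2 ^ 2)

/-- The spherical projection coordinates `S`. -/
def sphProj (x : ℝ × ℝ × ℝ) : ℝ × ℝ × ℝ :=
  (sphNorm x, x.2.1 / (x.1 + sphNorm x), x.2.2 / (x.1 + sphNorm x))

/-- The inverse of the spherical projection coordinates. -/
def sphProjInv (z : ℝ × ℝ × ℝ) : ℝ × ℝ × ℝ :=
  (z.1 * (1 - (z.2.1 ^ 2 + z.2.2 ^ 2)) / (1 + (z.2.1 ^ 2 + z.2.2 ^ 2)),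
   2 * z.1 * z.2.1 / (1 + (z.2.1 ^ 2 + z.2.2 ^ 2)),
   2 * z.1 * z.2.2 / (1 + (z.2.1 ^ 2 + z.2.2 ^ 2)))

/-- Directional (partial) derivative of a function on `ℝ³`. -/
def pd (v : ℝ × ℝ × ℝ) (f : ℝ × ℝ × ℝ → ℝ) (p : ℝ × ℝ × ℝ) : ℝ := fderiv ℝ f p v

/-!
Write `T = sphProjInv` and `ψ = φ ∘ T`. The second-order chain rule gives
`∂ᵢ²ψ(z) = D²φ(Tz)(∂ᵢT, ∂ᵢT) + Dφ(Tz)(∂ᵢ²T)`. The columns `∂₁T, ∂₂T, ∂₃T` of the Jacobian of `T`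
are orthogonal with squared lengths `1, λ⁻¹, λ⁻¹`, where `λ = (1 + |z'|²)² / (4 z₁²)`, so the
second-order parts of `∂₁²ψ + λ (∂₂²ψ + ∂₃²ψ)` add up to the trace of `D²φ`, that is, to `Δφ`.
The first-order parts are `Dφ` applied to `∂₁²T + λ (∂₂²T + ∂₃²T)`, which equals `-(2/z₁) ∂₁T`
and is cancelled by the term `(2/z₁) ∂₁ψ`.
-/

open Topology
open scoped ContDiff

section SecondOrderChainRule

variable {E F G : Type*} [NormedAddCommGroup E] [NormedSpace ℝ E] [NormedAddCommGroup F]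
  [NormedSpace ℝ F] [NormedAddCommGroup G] [NormedSpace ℝ G]

theorem fderiv_apply_eq_deriv_line {f : E → F} {z : E} (hf : DifferentiableAt ℝ f z) (v : E) :
    fderiv ℝ f z v = deriv (fun t : ℝ => f (z + t • v)) 0 := by
  have hline : HasDerivAt (fun t : ℝ => z + t • v) v 0 := by
    simpa using ((hasDerivAt_id (0 : ℝ)).smul_const v).const_add z
  exact (hf.hasFDerivAt.comp_hasDerivAt_of_eq 0 hline (by simp)).deriv.symm

theorem fderiv_fderiv_apply_self_eq_deriv_line {f : E → F} {z : E}
    (hf : DifferentiableAt ℝ (fderiv ℝ f) z) (v : E) :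
    fderiv ℝ (fderiv ℝ f) z v v = deriv (fun t : ℝ => fderiv ℝ f (z + t • v) v) 0 := by
  rw [← fderiv_apply_eq_deriv_line (hf.clm_apply (differentiableAt_const v)),
    fderiv_clm_apply hf (differentiableAt_const v)]
  simp

theorem deriv_prodMk {f₁ : ℝ → F} {f₂ : ℝ → G} {t : ℝ} (h₁ : DifferentiableAt ℝ f₁ t)
    (h₂ : DifferentiableAt ℝ f₂ t) :
    deriv (fun s => (f₁ s, f₂ s)) t = (deriv f₁ t, deriv f₂ t) :=
  (h₁.hasDerivAt.prodMk h₂.hasDerivAt).deriv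

theorem fderiv_fderiv_comp_apply_self {f : F → G} {T : E → F} {y : E}
    (hf : ContDiffAt ℝ 2 f (T y)) (hT : ContDiffAt ℝ 2 T y) (v : E) :
    fderiv ℝ (fun y' => fderiv ℝ (f ∘ T) y' v) y v =
      fderiv ℝ (fderiv ℝ f) (T y) (fderiv ℝ T y v) (fderiv ℝ T y v)
        + fderiv ℝ f (T y) (fderiv ℝ (fderiv ℝ T) y v v) := by
  have hTd : DifferentiableAt ℝ T y := hT.differentiableAt two_ne_zero
  have hf' : DifferentiableAt ℝ (fderiv ℝ f) (T y) :=
    (hf.fderiv_right (m := 1) le_rfl).differentiableAt one_ne_zero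
  have hT' : DifferentiableAt ℝ (fderiv ℝ T) y :=
    (hT.fderiv_right (m := 1) le_rfl).differentiableAt one_ne_zero
  have hchain : (fun y' => fderiv ℝ (f ∘ T) y' v)
      =ᶠ[𝓝 y] fun y' => fderiv ℝ f (T y') (fderiv ℝ T y' v) := by
    filter_upwards [hT.continuousAt.eventually (hf.eventually (by simp)), hT.eventually (by simp)]
      with y' hfy' hTy'
    rw [fderiv_comp y' (hfy'.differentiableAt two_ne_zero) (hTy'.differentiableAt two_ne_zero)]
    rfl
  rw [hchain.fderiv_eq, fderiv_clm_apply (c := fun y' => fderiv ℝ f (T y')) (hf'.comp y hTd)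
      (hT'.clm_apply (differentiableAt_const v)),
    show (fun y' => fderiv ℝ f (T y')) = fderiv ℝ f ∘ T from rfl, fderiv_comp y hf' hTd,
    fderiv_clm_apply hT' (differentiableAt_const v)]
  simpa using add_comm _ _

end SecondOrderChainRule

theorem pd_pd_eq_fderiv_fderiv {f : ℝ × ℝ × ℝ → ℝ} {x : ℝ × ℝ × ℝ}
    (hf : DifferentiableAt ℝ (fderiv ℝ f) x) (v w : ℝ × ℝ × ℝ) :
    pd w (pd v f) x = fderiv ℝ (fderiv ℝ f) x w v := by
  unfold pd
  rw [fderiv_clm_apply hf (differentiableAt_const v)]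
  simp

theorem sphNorm_sq (x : ℝ × ℝ × ℝ) : sphNorm x ^ 2 = x.1 ^ 2 + x.2.1 ^ 2 + x.2.2 ^ 2 :=
  Real.sq_sqrt (by positivity)

theorem sphNorm_pos {x : ℝ × ℝ × ℝ} (hx : 0 < x.1) : 0 < sphNorm x :=
  Real.sqrt_pos.mpr (by positivity)

theorem continuous_sphNorm : Continuous sphNorm := by
  unfold sphNorm; fun_prop

theorem isOpen_shell (r1 r2 : ℝ) :
    IsOpen {x : ℝ × ℝ × ℝ | 0 < x.1 ∧ r1 < sphNorm x ∧ sphNorm x < r2} :=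
  (isOpen_lt continuous_const continuous_fst).inter
    ((isOpen_lt continuous_const continuous_sphNorm).inter
      (isOpen_lt continuous_sphNorm continuous_const))

theorem sphProjInv_sphProj {x : ℝ × ℝ × ℝ} (hx : 0 < x.1) : sphProjInv (sphProj x) = x := by
  have hr := sphNorm_pos hx
  have hr2 := sphNorm_sq x
  have hQ : 1 + ((x.2.1 / (x.1 + sphNorm x)) ^ 2 + (x.2.2 / (x.1 + sphNorm x)) ^ 2)
      = 2 * sphNorm x / (x.1 + sphNorm x) := by
    field_simp
    linear_combination -hr2
  simp only [sphProjInv, sphProj, hQ]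
  ext
  · field_simp
    linear_combination hr2
  · field_simp
  · field_simp

theorem contDiff_sphProjInv : ContDiff ℝ ∞ sphProjInv := by
  unfold sphProjInv
  fun_prop (disch := intro; positivity)

theorem differentiable_fderiv_sphProjInv : Differentiable ℝ (fderiv ℝ sphProjInv) :=
  (contDiff_sphProjInv.fderiv_right (m := 1) (by norm_cast)).differentiable one_ne_zero

theorem fderiv_sphProjInv_apply_e₁ (z : ℝ × ℝ × ℝ) : fderiv ℝ sphProjInv z (1, 0, 0) =
    ((1 - (z.2.1 ^ 2 + z.2.2 ^ 2)) / (1 + (z.2.1 ^ 2 + z.2.2 ^ 2)),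
      2 * z.2.1 / (1 + (z.2.1 ^ 2 + z.2.2 ^ 2)), 2 * z.2.2 / (1 + (z.2.1 ^ 2 + z.2.2 ^ 2))) := by
  rw [fderiv_apply_eq_deriv_line (contDiff_sphProjInv.differentiable (by simp) z)]
  simp (disch := first | positivity | fun_prop (disch := positivity)) [sphProjInv, deriv_prodMk]

theorem fderiv_sphProjInv_apply_e₂ (z : ℝ × ℝ × ℝ) : fderiv ℝ sphProjInv z (0, 1, 0) =
    (-4 * z.1 * z.2.1 / (1 + (z.2.1 ^ 2 + z.2.2 ^ 2)) ^ 2,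
      2 * z.1 * (1 - z.2.1 ^ 2 + z.2.2 ^ 2) / (1 + (z.2.1 ^ 2 + z.2.2 ^ 2)) ^ 2,
      -4 * z.1 * z.2.1 * z.2.2 / (1 + (z.2.1 ^ 2 + z.2.2 ^ 2)) ^ 2) := by
  rw [fderiv_apply_eq_deriv_line (contDiff_sphProjInv.differentiable (by simp) z)]
  simp (disch := first | positivity | fun_prop (disch := positivity))
    [sphProjInv, deriv_prodMk, deriv_fun_div]
  refine ⟨?_, ?_, ?_⟩ <;> field_simp <;> ring

theorem fderiv_sphProjInv_apply_e₃ (z : ℝ × ℝ × ℝ) : fderiv ℝ sphProjInv z (0, 0, 1) =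
    (-4 * z.1 * z.2.2 / (1 + (z.2.1 ^ 2 + z.2.2 ^ 2)) ^ 2,
      -4 * z.1 * z.2.1 * z.2.2 / (1 + (z.2.1 ^ 2 + z.2.2 ^ 2)) ^ 2,
      2 * z.1 * (1 + z.2.1 ^ 2 - z.2.2 ^ 2) / (1 + (z.2.1 ^ 2 + z.2.2 ^ 2)) ^ 2) := by
  rw [fderiv_apply_eq_deriv_line (contDiff_sphProjInv.differentiable (by simp) z)]
  simp (disch := first | positivity | fun_prop (disch := positivity))
    [sphProjInv, deriv_prodMk, deriv_fun_div]
  refine ⟨?_, ?_, ?_⟩ <;> field_simp <;> ring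

theorem fderiv_fderiv_sphProjInv_apply_e₁_e₁ (z : ℝ × ℝ × ℝ) :
    fderiv ℝ (fderiv ℝ sphProjInv) z (1, 0, 0) (1, 0, 0) = 0 := by
  rw [fderiv_fderiv_apply_self_eq_deriv_line (differentiable_fderiv_sphProjInv z)]
  simp [fderiv_sphProjInv_apply_e₁]

theorem fderiv_fderiv_sphProjInv_apply_e₂_e₂ (z : ℝ × ℝ × ℝ) :
    fderiv ℝ (fderiv ℝ sphProjInv) z (0, 1, 0) (0, 1, 0) =
      (-4 * z.1 * (1 - 3 * z.2.1 ^ 2 + z.2.2 ^ 2) / (1 + (z.2.1 ^ 2 + z.2.2 ^ 2)) ^ 3,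
        -4 * z.1 * z.2.1 * (3 - z.2.1 ^ 2 + 3 * z.2.2 ^ 2) / (1 + (z.2.1 ^ 2 + z.2.2 ^ 2)) ^ 3,
        -4 * z.1 * z.2.2 * (1 - 3 * z.2.1 ^ 2 + z.2.2 ^ 2) / (1 + (z.2.1 ^ 2 + z.2.2 ^ 2)) ^ 3) := by
  rw [fderiv_fderiv_apply_self_eq_deriv_line (differentiable_fderiv_sphProjInv z)]
  simp (disch := first | positivity | fun_prop (disch := positivity))
    [fderiv_sphProjInv_apply_e₂, deriv_prodMk, deriv_fun_div]
  refine ⟨?_, ?_, ?_⟩ <;> field_simp <;> ring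

theorem fderiv_fderiv_sphProjInv_apply_e₃_e₃ (z : ℝ × ℝ × ℝ) :
    fderiv ℝ (fderiv ℝ sphProjInv) z (0, 0, 1) (0, 0, 1) =
      (-4 * z.1 * (1 + z.2.1 ^ 2 - 3 * z.2.2 ^ 2) / (1 + (z.2.1 ^ 2 + z.2.2 ^ 2)) ^ 3,
        -4 * z.1 * z.2.1 * (1 + z.2.1 ^ 2 - 3 * z.2.2 ^ 2) / (1 + (z.2.1 ^ 2 + z.2.2 ^ 2)) ^ 3,
        -4 * z.1 * z.2.2 * (3 + 3 * z.2.1 ^ 2 - z.2.2 ^ 2) / (1 + (z.2.1 ^ 2 + z.2.2 ^ 2)) ^ 3) := by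
  rw [fderiv_fderiv_apply_self_eq_deriv_line (differentiable_fderiv_sphProjInv z)]
  simp (disch := first | positivity | fun_prop (disch := positivity))
    [fderiv_sphProjInv_apply_e₃, deriv_prodMk, deriv_fun_div]
  refine ⟨?_, ?_, ?_⟩ <;> field_simp <;> ring

theorem bilinear_apply_eq_sum_coord (H : (ℝ × ℝ × ℝ) →L[ℝ] (ℝ × ℝ × ℝ) →L[ℝ] ℝ)
    (u w : ℝ × ℝ × ℝ) :
    H u w =
      u.1 * w.1 * H (1, 0, 0) (1, 0, 0) + u.1 * w.2.1 * H (1, 0, 0) (0, 1, 0)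
        + u.1 * w.2.2 * H (1, 0, 0) (0, 0, 1) + u.2.1 * w.1 * H (0, 1, 0) (1, 0, 0)
        + u.2.1 * w.2.1 * H (0, 1, 0) (0, 1, 0) + u.2.1 * w.2.2 * H (0, 1, 0) (0, 0, 1)
        + u.2.2 * w.1 * H (0, 0, 1) (1, 0, 0) + u.2.2 * w.2.1 * H (0, 0, 1) (0, 1, 0)
        + u.2.2 * w.2.2 * H (0, 0, 1) (0, 0, 1) := by
  have h : ∀ u : ℝ × ℝ × ℝ, u = u.1 • (1, 0, 0) + u.2.1 • (0, 1, 0) + u.2.2 • (0, 0, 1) := by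
    intro u; ext <;> simp
  conv_lhs => rw [h u, h w]
  simp only [map_add, map_smul, add_apply, smul_apply, smul_eq_mul]
  ring

theorem trace_eq_weighted_sum_fderiv_sphProjInv (H : (ℝ × ℝ × ℝ) →L[ℝ] (ℝ × ℝ × ℝ) →L[ℝ] ℝ)
    {z : ℝ × ℝ × ℝ} (hz : z.1 ≠ 0) :
    H (1, 0, 0) (1, 0, 0) + H (0, 1, 0) (0, 1, 0) + H (0, 0, 1) (0, 0, 1) =
      H (fderiv ℝ sphProjInv z (1, 0, 0)) (fderiv ℝ sphProjInv z (1, 0, 0))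
        + (1 + (z.2.1 ^ 2 + z.2.2 ^ 2)) ^ 2 / (4 * z.1 ^ 2) *
          (H (fderiv ℝ sphProjInv z (0, 1, 0)) (fderiv ℝ sphProjInv z (0, 1, 0))
            + H (fderiv ℝ sphProjInv z (0, 0, 1)) (fderiv ℝ sphProjInv z (0, 0, 1))) := by
  rw [bilinear_apply_eq_sum_coord H (fderiv ℝ sphProjInv z (1, 0, 0)),
    bilinear_apply_eq_sum_coord H (fderiv ℝ sphProjInv z (0, 1, 0)),
    bilinear_apply_eq_sum_coord H (fderiv ℝ sphProjInv z (0, 0, 1)),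
    fderiv_sphProjInv_apply_e₁, fderiv_sphProjInv_apply_e₂, fderiv_sphProjInv_apply_e₃]
  field_simp
  ring

theorem transformedLaplacian_sphProjInv_eq_zero {z : ℝ × ℝ × ℝ} (hz : z.1 ≠ 0) :
    fderiv ℝ (fderiv ℝ sphProjInv) z (1, 0, 0) (1, 0, 0)
      + ((1 + (z.2.1 ^ 2 + z.2.2 ^ 2)) ^ 2 / (4 * z.1 ^ 2)) •
        (fderiv ℝ (fderiv ℝ sphProjInv) z (0, 1, 0) (0, 1, 0)
          + fderiv ℝ (fderiv ℝ sphProjInv) z (0, 0, 1) (0, 0, 1))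
      + (2 / z.1) • fderiv ℝ sphProjInv z (1, 0, 0) = 0 := by
  simp only [fderiv_fderiv_sphProjInv_apply_e₁_e₁, fderiv_fderiv_sphProjInv_apply_e₂_e₂,
    fderiv_fderiv_sphProjInv_apply_e₃_e₃, fderiv_sphProjInv_apply_e₁]
  simp only [Prod.smul_mk, Prod.mk_add_mk, smul_eq_mul, Prod.mk_eq_zero, zero_add]
  refine ⟨?_, ?_, ?_⟩ <;> field_simp <;> ring

theorem laplacian_comp_sphProjInv {φ : ℝ × ℝ × ℝ → ℝ} {z : ℝ × ℝ × ℝ} (hz : z.1 ≠ 0)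
    (hφ : ContDiffAt ℝ 2 φ (sphProjInv z)) :
    pd (1, 0, 0) (pd (1, 0, 0) φ) (sphProjInv z) + pd (0, 1, 0) (pd (0, 1, 0) φ) (sphProjInv z)
        + pd (0, 0, 1) (pd (0, 0, 1) φ) (sphProjInv z)
      = pd (1, 0, 0) (pd (1, 0, 0) (φ ∘ sphProjInv)) z
          + ((1 + (z.2.1 ^ 2 + z.2.2 ^ 2)) ^ 2 / (4 * z.1 ^ 2)) *
            (pd (0, 1, 0) (pd (0, 1, 0) (φ ∘ sphProjInv)) z
              + pd (0, 0, 1) (pd (0, 0, 1) (φ ∘ sphProjInv)) z)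
          + (2 / z.1) * pd (1, 0, 0) (φ ∘ sphProjInv) z := by
  have hT : ContDiffAt ℝ 2 sphProjInv z := contDiff_sphProjInv.contDiffAt.of_le (by norm_cast)
  have hφ' : DifferentiableAt ℝ (fderiv ℝ φ) (sphProjInv z) :=
    (hφ.fderiv_right (m := 1) le_rfl).differentiableAt one_ne_zero
  have hfirst := congrArg (fderiv ℝ φ (sphProjInv z)) (transformedLaplacian_sphProjInv_eq_zero hz)
  simp only [map_add, map_smul, map_zero, smul_eq_mul] at hfirst
  simp only [pd_pd_eq_fderiv_fderiv hφ']
  unfold pd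
  rw [fderiv_fderiv_comp_apply_self hφ hT, fderiv_fderiv_comp_apply_self hφ hT,
    fderiv_fderiv_comp_apply_self hφ hT, fderiv_comp z (hφ.differentiableAt two_ne_zero)
    (hT.differentiableAt two_ne_zero), ContinuousLinearMap.comp_apply,
    trace_eq_weighted_sum_fderiv_sphProjInv _ hz]
  linear_combination -hfirst

theorem laplacian_in_spherical_projection_coordinates_general (r1 r2 : ℝ) (φ : ℝ × ℝ × ℝ → ℝ)
    (hφ : ContDiffOn ℝ 2 φ {x | 0 < x.1 ∧ r1 < sphNorm x ∧ sphNorm x < r2}) :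
    ∀ x ∈ {x : ℝ × ℝ × ℝ | 0 < x.1 ∧ r1 < sphNorm x ∧ sphNorm x < r2},
      pd (1, 0, 0) (pd (1, 0, 0) φ) x + pd (0, 1, 0) (pd (0, 1, 0) φ) x
          + pd (0, 0, 1) (pd (0, 0, 1) φ) x
        = pd (1, 0, 0) (pd (1, 0, 0) (φ ∘ sphProjInv)) (sphProj x)
            + ((1 + ((sphProj x).2.1 ^ 2 + (sphProj x).2.2 ^ 2)) ^ 2
                / (4 * (sphProj x).1 ^ 2)) *
              (pd (0, 1, 0) (pd (0, 1, 0) (φ ∘ sphProjInv)) (sphProj x)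
                + pd (0, 0, 1) (pd (0, 0, 1) (φ ∘ sphProjInv)) (sphProj x))
            + (2 / (sphProj x).1) * pd (1, 0, 0) (φ ∘ sphProjInv) (sphProj x) := by
  intro x hx
  have hinv : sphProjInv (sphProj x) = x := sphProjInv_sphProj hx.1
  have hφx : ContDiffAt ℝ 2 φ (sphProjInv (sphProj x)) := by
    rw [hinv]
    exact hφ.contDiffAt ((isOpen_shell r1 r2).mem_nhds hx)
  simpa only [hinv] using laplacian_comp_sphProjInv (sphNorm_pos hx.1).ne' hφx

/-- the Euclidean Laplacian transforms under the spherical projection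
coordinates into `∂²_{z1} + ((1+|z'|²)²/(4z1²)) (∂²_{z2} + ∂²_{z3}) + (2/z1) ∂_{z1}`. -/
theorem laplacian_in_spherical_projection_coordinates (r1 r2 : ℝ)
    (hr1 : 0 < r1) (hr12 : r1 < r2) (φ : ℝ × ℝ × ℝ → ℝ)
    (hφ : ContDiffOn ℝ 2 φ {x | 0 < x.1 ∧ r1 < sphNorm x ∧ sphNorm x < r2}) :
    ∀ x ∈ {x : ℝ × ℝ × ℝ | 0 < x.1 ∧ r1 < sphNorm x ∧ sphNorm x < r2},
      pd (1, 0, 0) (pd (1, 0, 0) φ) x + pd (0, 1, 0) (pd (0, 1, 0) φ) x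
          + pd (0, 0, 1) (pd (0, 0, 1) φ) x
        = pd (1, 0, 0) (pd (1, 0, 0) (φ ∘ sphProjInv)) (sphProj x)
            + ((1 + ((sphProj x).2.1 ^ 2 + (sphProj x).2.2 ^ 2)) ^ 2
                / (4 * (sphProj x).1 ^ 2)) *
              (pd (0, 1, 0) (pd (0, 1, 0) (φ ∘ sphProjInv)) (sphProj x)
                + pd (0, 0, 1) (pd (0, 0, 1) (φ ∘ sphProjInv)) (sphProj x))
            + (2 / (sphProj x).1) * pd (1, 0, 0) (φ ∘ sphProjInv) (sphProj x) :=
  laplacian_in_spherical_projection_coordinates_general r1 r2 φ hφ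
end
end

section
/- Let E be the open unit disc in R^2 and let F2, F3 be C^1 functions on the closed disc. If (i) d(F3)/dy2 - d(F2)/dy3 = 0 in E, (ii) d(F2)/dy2 + d(F3)/dy3 = 0 in E, and (iii) y2 F2 + y3 F3 = 0 on the boundary circle y2^2 + y3^2 = 1, then F2 and F3 vanish identically on the closed unit disc. -/
noncomputable section

/-- The open unit disc in `ℝ²`. -/
def unitDisc : Set (ℝ × ℝ) := {p | p.1 ^ 2 + p.2 ^ 2 < 1}

/-- The closed unit disc in `ℝ²`. -/
def closedUnitDisc : Set (ℝ × ℝ) := {p | p.1 ^ 2 + p.2 ^ 2 ≤ 1}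

/-- Directional (partial) derivative of a function on `ℝ²`. -/
def pd2 (v : ℝ × ℝ) (f : ℝ × ℝ → ℝ) (p : ℝ × ℝ) : ℝ := fderiv ℝ f p v

/-!
The curl and divergence conditions are the Cauchy–Riemann equations for `f = F₂ - i F₃`, so `f`
is holomorphic in the disc, and the boundary condition says `Re (z f z) = 0` on the unit circle.
By the maximum principle applied to `exp (± z f z)`, `Re (z f z)` vanishes in the whole disc, so
by the open mapping theorem `z f z` is constant, equal to its value `0` at the origin. Hence `f`
vanishes off the origin, and everywhere by continuity.
-/

open Complex Metric Set Filter

section MaximumPrinciple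

variable {E : Type*} [NormedAddCommGroup E] [NormedSpace ℂ E] [Nontrivial E]
  {g : E → ℂ} {U : Set E}

theorem DiffContOnCl.re_le_of_forall_mem_frontier_re_le (hU : Bornology.IsBounded U)
    (hg : DiffContOnCl ℂ g U) {C : ℝ} (hC : ∀ z ∈ frontier U, (g z).re ≤ C) {z : E}
    (hz : z ∈ closure U) : (g z).re ≤ C := by
  have hexp : ‖exp (g z)‖ ≤ Real.exp C :=
    norm_le_of_forall_mem_frontier_norm_le hU (differentiable_exp.comp_diffContOnCl hg)
      (fun w hw => by simpa [norm_exp] using hC w hw) hz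
  simpa [norm_exp] using hexp

theorem DiffContOnCl.re_eq_zero_of_forall_mem_frontier (hU : Bornology.IsBounded U)
    (hg : DiffContOnCl ℂ g U) (h : ∀ z ∈ frontier U, (g z).re = 0) {z : E}
    (hz : z ∈ closure U) : (g z).re = 0 := by
  have hle := hg.re_le_of_forall_mem_frontier_re_le hU (fun w hw => (h w hw).le) hz
  have hge := hg.neg.re_le_of_forall_mem_frontier_re_le hU (C := 0)
    (fun w hw => by simp [h w hw]) hz
  simp only [Pi.neg_apply, neg_re] at hge
  linarith

end MaximumPrinciple

theorem DifferentiableOn.exists_eq_const_of_re_eq_zero {g : ℂ → ℂ} {U : Set ℂ}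
    (hg : DifferentiableOn ℂ g U) (hU : IsOpen U) (hc : IsPreconnected U)
    (hre : ∀ z ∈ U, (g z).re = 0) : ∃ w, ∀ z ∈ U, g z = w := by
  rcases U.eq_empty_or_nonempty with rfl | ⟨z₀, hz₀⟩
  · exact ⟨0, fun z hz => hz.elim⟩
  refine ((hg.analyticOnNhd hU).is_constant_or_isOpen hc).resolve_right fun hopen => ?_
  obtain ⟨ε, hε, hball⟩ := Metric.isOpen_iff.mp (hopen U subset_rfl hU) (g z₀) ⟨z₀, hz₀, rfl⟩
  obtain ⟨z₁, hz₁, hg₁⟩ := hball (show g z₀ + (ε / 2 : ℝ) ∈ ball (g z₀) ε by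
    simp [abs_of_pos hε, hε])
  have hre₁ := congrArg re hg₁
  simp [hre z₀ hz₀, hre z₁ hz₁] at hre₁
  linarith

theorem DiffContOnCl.exists_eq_const_of_forall_mem_frontier_re_eq_zero {g : ℂ → ℂ} {U : Set ℂ}
    (hg : DiffContOnCl ℂ g U) (hUb : Bornology.IsBounded U) (hUo : IsOpen U)
    (hUc : IsPreconnected U) (h : ∀ z ∈ frontier U, (g z).re = 0) :
    ∃ w, ∀ z ∈ U, g z = w :=
  hg.differentiableOn.exists_eq_const_of_re_eq_zero hUo hUc fun _ hz =>
    hg.re_eq_zero_of_forall_mem_frontier hUb h (subset_closure hz)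

theorem IsOpen.eq_zero_on_closure_of_mul_eq_zero {f : ℂ → ℂ} {U : Set ℂ} (hU : IsOpen U)
    (hf : ContinuousOn f (closure U)) (h : ∀ z ∈ U, z * f z = 0) :
    ∀ z ∈ closure U, f z = 0 := by
  have hdense : closure U ⊆ closure (U ∩ {0}ᶜ) :=
    closure_minimal ((dense_compl_singleton 0).open_subset_closure_inter hU) isClosed_closure
  refine fun z hz => EqOn.of_subset_closure (f := f) (g := fun _ => 0) (fun w hw => ?_) hf
    continuousOn_const (inter_subset_left.trans subset_closure) hdense hz
  exact (mul_eq_zero.mp (h w hw.1)).resolve_left hw.2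

def toComplexFun (u v : ℝ × ℝ → ℝ) (z : ℂ) : ℂ := ⟨u (z.re, z.im), v (z.re, z.im)⟩

theorem differentiableAt_toComplexFun {u v : ℝ × ℝ → ℝ} {z : ℂ}
    (hu : DifferentiableAt ℝ u (z.re, z.im)) (hv : DifferentiableAt ℝ v (z.re, z.im))
    (h₁ : fderiv ℝ u (z.re, z.im) (1, 0) = fderiv ℝ v (z.re, z.im) (0, 1))
    (h₂ : fderiv ℝ u (z.re, z.im) (0, 1) = -fderiv ℝ v (z.re, z.im) (1, 0)) :
    DifferentiableAt ℂ (toComplexFun u v) z := by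
  have hreal := (equivRealProdCLM.symm : ℝ × ℝ →L[ℝ] ℂ).hasFDerivAt.comp z
    ((hu.hasFDerivAt.prodMk hv.hasFDerivAt).comp z equivRealProdCLM.hasFDerivAt)
  refine (HasFDerivAt.complexOfReal_hasFDerivAt (f := toComplexFun u v) hreal ?_).differentiableAt
  apply Complex.ext <;> simp [h₁, h₂]

theorem ContinuousOn.toComplexFun {u v : ℝ × ℝ → ℝ} {s : Set ℂ} {t : Set (ℝ × ℝ)}
    (hu : ContinuousOn u t) (hv : ContinuousOn v t) (hst : MapsTo (fun z => (z.re, z.im)) s t) :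
    ContinuousOn (toComplexFun u v) s :=
  equivRealProdCLM.symm.continuous.comp_continuousOn
    ((hu.prodMk hv).comp equivRealProdCLM.continuous.continuousOn hst)

theorem re_sq_add_im_sq (z : ℂ) : z.re ^ 2 + z.im ^ 2 = ‖z‖ ^ 2 := by
  rw [Complex.sq_norm, normSq_apply]; ring

theorem mem_unitDisc_iff {z : ℂ} : (z.re, z.im) ∈ unitDisc ↔ z ∈ ball (0 : ℂ) 1 := by
  rw [mem_ball_zero_iff, ← sq_lt_one_iff₀ (norm_nonneg z), ← re_sq_add_im_sq]; rfl

theorem mem_closedUnitDisc_iff {z : ℂ} :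
    (z.re, z.im) ∈ closedUnitDisc ↔ z ∈ closedBall (0 : ℂ) 1 := by
  rw [mem_closedBall_zero_iff, ← sq_le_one_iff₀ (norm_nonneg z), ← re_sq_add_im_sq]; rfl

theorem isOpen_unitDisc : IsOpen unitDisc :=
  show IsOpen ((fun p : ℝ × ℝ => p.1 ^ 2 + p.2 ^ 2) ⁻¹' Iio 1) from
    isOpen_Iio.preimage (by fun_prop)

theorem unitDisc_subset_closedUnitDisc : unitDisc ⊆ closedUnitDisc :=
  fun p hp => show p.1 ^ 2 + p.2 ^ 2 ≤ 1 from le_of_lt hp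

theorem differentiableOn_toComplexFun_of_curl_div_eq_zero {F2 F3 : ℝ × ℝ → ℝ}
    (hF2 : ContDiffOn ℝ 1 F2 closedUnitDisc) (hF3 : ContDiffOn ℝ 1 F3 closedUnitDisc)
    (hcurl : ∀ p ∈ unitDisc, pd2 (1, 0) F3 p - pd2 (0, 1) F2 p = 0)
    (hdiv : ∀ p ∈ unitDisc, pd2 (1, 0) F2 p + pd2 (0, 1) F3 p = 0) :
    DifferentiableOn ℂ (toComplexFun F2 fun p => -F3 p) (ball 0 1) := by
  intro z hz
  have hp := mem_unitDisc_iff.mpr hz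
  have hnhds := mem_of_superset (isOpen_unitDisc.mem_nhds hp) unitDisc_subset_closedUnitDisc
  have h2 := (hF2.contDiffAt hnhds).differentiableAt one_ne_zero
  have h3 := (hF3.contDiffAt hnhds).differentiableAt one_ne_zero
  refine (differentiableAt_toComplexFun h2 h3.neg ?_ ?_).differentiableWithinAt
  · simpa [fderiv_neg, pd2, add_eq_zero_iff_eq_neg] using hdiv _ hp
  · simpa [fderiv_neg, pd2] using (sub_eq_zero.mp (hcurl _ hp)).symm

/-- a `C¹` vector field `(F₂, F₃)` on the closed unit disc which is
curl-free and divergence-free in the open disc and has vanishing normal component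
on the boundary circle vanishes identically. -/
theorem curl_div_free_vanishing_normal_trace_eq_zero (F2 F3 : ℝ × ℝ → ℝ)
    (hF2 : ContDiffOn ℝ 1 F2 closedUnitDisc) (hF3 : ContDiffOn ℝ 1 F3 closedUnitDisc)
    (hcurl : ∀ p ∈ unitDisc, pd2 (1, 0) F3 p - pd2 (0, 1) F2 p = 0)
    (hdiv : ∀ p ∈ unitDisc, pd2 (1, 0) F2 p + pd2 (0, 1) F3 p = 0)
    (hbc : ∀ p : ℝ × ℝ, p.1 ^ 2 + p.2 ^ 2 = 1 → p.1 * F2 p + p.2 * F3 p = 0) :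
    ∀ p ∈ closedUnitDisc, F2 p = 0 ∧ F3 p = 0 := by
  set f := toComplexFun F2 fun p => -F3 p
  have hf_cont : ContinuousOn f (closedBall 0 1) :=
    hF2.continuousOn.toComplexFun hF3.continuousOn.neg fun _ => mem_closedUnitDisc_iff.mpr
  have hg : DiffContOnCl ℂ (fun z => z * f z) (ball 0 1) :=
    .mk_ball (differentiableOn_id.mul
      (differentiableOn_toComplexFun_of_curl_div_eq_zero hF2 hF3 hcurl hdiv))
      (continuousOn_id.mul hf_cont)
  have hg_re_sphere : ∀ z ∈ frontier (ball (0 : ℂ) 1), (z * f z).re = 0 := by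
    intro z hz
    rw [frontier_ball 0 one_ne_zero, mem_sphere_zero_iff_norm] at hz
    have hnormal := hbc (z.re, z.im) (by rw [re_sq_add_im_sq, hz, one_pow])
    simpa [f, toComplexFun, mul_re] using hnormal
  obtain ⟨w, hw⟩ := hg.exists_eq_const_of_forall_mem_frontier_re_eq_zero isBounded_ball
    isOpen_ball (convex_ball 0 1).isPreconnected hg_re_sphere
  have hg_zero : ∀ z ∈ ball (0 : ℂ) 1, z * f z = 0 := fun z hz =>
    (hw z hz).trans ((hw 0 (mem_ball_self one_pos)).symm.trans (zero_mul _))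
  have hf_zero := isOpen_ball.eq_zero_on_closure_of_mul_eq_zero
    ((closure_ball (0 : ℂ) one_ne_zero).symm ▸ hf_cont) hg_zero
  intro p hp
  have hfp := hf_zero (equivRealProd.symm p)
    ((closure_ball (0 : ℂ) one_ne_zero).symm ▸ mem_closedUnitDisc_iff.mp (by simpa using hp))
  exact ⟨congrArg re hfp, neg_eq_zero.mp (congrArg im hfp)⟩

end
end

section
/- Let 0 < r_s < r_2, and let d1, d2, d4 be continuous functions on [r_s, r_2] with d1 > 0 and d4 >= 0, and let lambda >= 0, a4 > 0, a0 a1 >= 0. If X in C^2([r_s, r_2]) satisfies d1(t) X''(t) + (2/t + d2(t)) X'(t) - (lambda/(4t^2)) X(t) - a0 a1 d4(t) X(r_s) = 0 on [r_s, r_2], with boundary conditions X'(r_s) - a4 X(r_s) = 0 and X'(r_2) = 0, then X is identically zero. -/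
/-!
Dividing by `d1` and multiplying by the integrating factor `p = exp ∫ (2/t + d2)/d1` puts the
equation in the flux form `(p X')' = q X + r X(r_s)` with `q, r ≥ 0`. If `X(r_s) < 0`, the
Robin condition makes the flux negative at `r_s`; as long as `X` stays negative the flux
decreases, so `X' < 0` and `X` keeps decreasing. Hence `X < 0` and `p X' < 0` up to `r_2`,
contradicting `X'(r_2) = 0`. Applied to `-X` this gives `X(r_s) = 0`; the equation is then
homogeneous and the energy `p X' X` is monotone with zero boundary values, forcing `X' ≡ 0`.
-/

open Set Filter

lemma exists_integratingFactor {a b : ℝ} {g : ℝ → ℝ} (hab : a ≤ b)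
    (hg : ContinuousOn g (Icc a b)) :
    ∃ p : ℝ → ℝ, (∀ t, 0 < p t) ∧ ∀ t ∈ Icc a b, HasDerivAt p (p t * g t) t := by
  set G := IccExtend hab ((Icc a b).domRestrict g)
  have hG : Continuous G := (continuousOn_iff_continuous_domRestrict.1 hg).Icc_extend'
  refine ⟨fun t => Real.exp (∫ s in a..t, G s), fun t => Real.exp_pos _, fun t ht => ?_⟩
  have h := (hG.integral_hasStrictDerivAt a t).hasDerivAt.exp
  rw [show G t = g t from IccExtend_of_mem hab _ ht] at h
  exact h

lemma HasDerivAt.mul_of_add_mul_eq {p Y : ℝ → ℝ} {t g y' F : ℝ}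
    (hp : HasDerivAt p (p t * g) t) (hY : HasDerivAt Y y' t) (h : y' + g * Y t = F) :
    HasDerivAt (fun s => p s * Y s) (p t * F) t := by
  refine (hp.mul hY).congr_deriv ?_
  rw [← h]
  ring

lemma ContinuousOn.forall_mem_Icc_lt_zero {f : ℝ → ℝ} {a b : ℝ} (hf : ContinuousOn f (Icc a b))
    (ha : f a < 0)
    (h : ∀ t ∈ Ioc a b, (∀ s ∈ Ico a t, f s < 0) → f t < 0) : ∀ t ∈ Icc a b, f t < 0 := by
  by_contra! hT
  have hcl : IsClosed (Icc a b ∩ f ⁻¹' Ici 0) :=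
    hf.preimage_isClosed_of_isClosed isClosed_Icc isClosed_Ici
  obtain ⟨t, ⟨htI, ht⟩, hleast⟩ :=
    (isCompact_Icc.of_isClosed_subset hcl inter_subset_left).exists_isLeast hT
  have hat : a < t := htI.1.lt_of_ne (by rintro rfl; exact ht.not_gt ha)
  refine (h t ⟨hat, htI.2⟩ fun s hs => ?_).not_ge ht
  by_contra! hs0
  exact hs.2.not_ge (hleast ⟨⟨hs.1, hs.2.le.trans htI.2⟩, hs0⟩)

/-- `X` solves `(p X')' = q X + r X(a)` on `(a, b)`, with `V` standing for `X'`; the quantity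
`p V` is the flux. -/
structure FluxForm (a b : ℝ) (X V p q r : ℝ → ℝ) : Prop where
  continuousOn : ContinuousOn X (Icc a b)
  hasDerivAt : ∀ t ∈ Ioo a b, HasDerivAt X (V t) t
  pos : ∀ t ∈ Icc a b, 0 < p t
  continuousOn_flux : ContinuousOn (fun t => p t * V t) (Icc a b)
  hasDerivAt_flux : ∀ t ∈ Ioo a b, HasDerivAt (fun t => p t * V t) (q t * X t + r t * X a) t

namespace FluxForm

variable {a b κ : ℝ} {X V p q r : ℝ → ℝ}

lemma neg (h : FluxForm a b X V p q r) : FluxForm a b (-X) (-V) p q r := by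
  have hflux : (fun t => p t * (-V) t) = -fun t => p t * V t := by
    ext t
    simp
  refine ⟨h.continuousOn.neg, fun t ht => (h.hasDerivAt t ht).neg, h.pos, ?_, fun t ht => ?_⟩
  · exact hflux ▸ h.continuousOn_flux.neg
  · rw [hflux]
    exact (h.hasDerivAt_flux t ht).neg.congr_deriv (by simp only [Pi.neg_apply]; ring)

lemma lt_left_of_forall_Ico_lt_zero (h : FluxForm a b X V p q r) (hq : ∀ t ∈ Ioo a b, 0 ≤ q t)
    (hr : ∀ t ∈ Ioo a b, 0 ≤ r t) (hXa : X a < 0) (hVa : V a < 0) {t : ℝ} (ht : t ∈ Ioc a b)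
    (hneg : ∀ s ∈ Ico a t, X s < 0) : X t < X a ∧ p t * V t < 0 := by
  have hsub : Icc a t ⊆ Icc a b := Icc_subset_Icc_right ht.2
  have hIoo : ∀ s ∈ Ioo a t, s ∈ Ioo a b := fun s hs => ⟨hs.1, hs.2.trans_le ht.2⟩
  have hanti : AntitoneOn (fun s => p s * V s) (Icc a t) := by
    refine antitoneOn_of_hasDerivWithinAt_nonpos (f' := fun s => q s * X s + r s * X a)
      (convex_Icc a t) (h.continuousOn_flux.mono hsub) ?_ fun s hs => ?_
    · rw [interior_Icc]
      exact fun s hs => (h.hasDerivAt_flux s (hIoo s hs)).hasDerivWithinAt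
    · rw [interior_Icc] at hs
      have hXs := hneg s (Ioo_subset_Ico_self hs)
      have := hq s (hIoo s hs)
      have := hr s (hIoo s hs)
      nlinarith
  have hflux : ∀ s ∈ Icc a t, p s * V s < 0 := fun s hs =>
    (hanti (left_mem_Icc.2 ht.1.le) hs hs.1).trans_lt
      (mul_neg_of_pos_of_neg (h.pos a (left_mem_Icc.2 (ht.1.le.trans ht.2))) hVa)
  have hX : StrictAntiOn X (Icc a t) := by
    refine strictAntiOn_of_hasDerivWithinAt_neg (f' := V) (convex_Icc a t)
      (h.continuousOn.mono hsub) ?_ fun s hs => ?_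
    · rw [interior_Icc]
      exact fun s hs => (h.hasDerivAt s (hIoo s hs)).hasDerivWithinAt
    · rw [interior_Icc] at hs
      exact neg_of_mul_neg_right (hflux s (Ioo_subset_Icc_self hs))
        (h.pos s (hsub (Ioo_subset_Icc_self hs))).le
  exact ⟨hX (left_mem_Icc.2 ht.1.le) (right_mem_Icc.2 ht.1.le) ht.1,
    hflux t (right_mem_Icc.2 ht.1.le)⟩

lemma nonneg_of_robin_neumann (h : FluxForm a b X V p q r) (hab : a < b)
    (hq : ∀ t ∈ Ioo a b, 0 ≤ q t) (hr : ∀ t ∈ Ioo a b, 0 ≤ r t) (hκ : 0 < κ)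
    (hVa : V a = κ * X a) (hVb : V b = 0) : 0 ≤ X a := by
  by_contra! hXa
  have hVa' : V a < 0 := hVa ▸ mul_neg_of_pos_of_neg hκ hXa
  have hneg : ∀ t ∈ Icc a b, X t < 0 := h.continuousOn.forall_mem_Icc_lt_zero hXa
    fun t ht hlt => (h.lt_left_of_forall_Ico_lt_zero hq hr hXa hVa' ht hlt).1.trans hXa
  have hfluxb := (h.lt_left_of_forall_Ico_lt_zero hq hr hXa hVa' ⟨hab, le_rfl⟩
    fun s hs => hneg s (Ico_subset_Icc_self hs)).2
  simp [hVb] at hfluxb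

lemma eq_zero_of_left_eq_zero (h : FluxForm a b X V p q r) (hq : ∀ t ∈ Ioo a b, 0 ≤ q t)
    (hXa : X a = 0) (hVb : V b = 0) : ∀ t ∈ Icc a b, X t = 0 := by
  set Z := fun t => p t * V t * X t
  have hZ' : ∀ t ∈ Ioo a b, HasDerivAt Z (q t * X t ^ 2 + p t * V t ^ 2) t := fun t ht =>
    ((h.hasDerivAt_flux t ht).mul (h.hasDerivAt t ht)).congr_deriv (by rw [hXa]; ring)
  have hmono : MonotoneOn Z (Icc a b) := by
    refine monotoneOn_of_hasDerivWithinAt_nonneg (f' := fun t => q t * X t ^ 2 + p t * V t ^ 2)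
      (convex_Icc a b) (h.continuousOn_flux.mul h.continuousOn) ?_ fun t ht => ?_
    · rw [interior_Icc]
      exact fun t ht => (hZ' t ht).hasDerivWithinAt
    · rw [interior_Icc] at ht
      have := hq t ht
      have := h.pos t (Ioo_subset_Icc_self ht)
      positivity
  have hZ : ∀ t ∈ Icc a b, Z t = 0 := fun t ht => le_antisymm
    (by simpa [Z, hVb] using hmono ht (right_mem_Icc.2 (ht.1.trans ht.2)) ht.2)
    (by simpa [Z, hXa] using hmono (left_mem_Icc.2 (ht.1.trans ht.2)) ht ht.1)
  have hV : ∀ t ∈ Ioo a b, V t = 0 := by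
    intro t ht
    have hZ'0 : HasDerivAt Z 0 t := (hasDerivAt_const t 0).congr_of_eventuallyEq <|
      eventually_of_mem (Icc_mem_nhds ht.1 ht.2) hZ
    have hsum := (hZ' t ht).unique hZ'0
    have hp := h.pos t (Ioo_subset_Icc_self ht)
    have hpV : p t * V t ^ 2 = 0 := by nlinarith [mul_nonneg (hq t ht) (sq_nonneg (X t))]
    simpa [hp.ne'] using hpV
  intro t ht
  rcases ht.1.eq_or_lt with rfl | hat
  · exact hXa
  obtain ⟨c, hc, hslope⟩ := exists_hasDerivAt_eq_slope X V hat
    (h.continuousOn.mono (Icc_subset_Icc_right ht.2))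
    fun s hs => h.hasDerivAt s ⟨hs.1, hs.2.trans_le ht.2⟩
  rw [hV c ⟨hc.1, hc.2.trans_le ht.2⟩, hXa, sub_zero, eq_comm, div_eq_zero_iff] at hslope
  exact hslope.resolve_right (sub_ne_zero.2 hat.ne')

lemma eq_zero_of_robin_neumann (h : FluxForm a b X V p q r) (hab : a < b)
    (hq : ∀ t ∈ Ioo a b, 0 ≤ q t) (hr : ∀ t ∈ Ioo a b, 0 ≤ r t) (hκ : 0 < κ)
    (hVa : V a = κ * X a) (hVb : V b = 0) : ∀ t ∈ Icc a b, X t = 0 := by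
  have hXa := h.nonneg_of_robin_neumann hab hq hr hκ hVa hVb
  have hXa' := h.neg.nonneg_of_robin_neumann hab hq hr hκ (by simp [hVa]) (by simp [hVb])
  exact h.eq_zero_of_left_eq_zero hq (le_antisymm (by simpa using hXa') hXa) hVb

end FluxForm

theorem nonlocal_ode_uniqueness_general (rs r2 a0 a1 a4 lam : ℝ) (d1 d2 d4 : ℝ → ℝ) (X : ℝ → ℝ)
    (hrs : 0 < rs) (hr : rs < r2)
    (hd1c : ContinuousOn d1 (Icc rs r2)) (hd2c : ContinuousOn d2 (Icc rs r2))
    (hd1 : ∀ t ∈ Icc rs r2, 0 < d1 t) (hd4 : ∀ t ∈ Icc rs r2, 0 ≤ d4 t)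
    (hlam : 0 ≤ lam) (ha4 : 0 < a4) (ha01 : 0 ≤ a0 * a1)
    (hX : ContDiffOn ℝ 2 X (Icc rs r2))
    (heq : ∀ t ∈ Icc rs r2,
      d1 t * derivWithin (derivWithin X (Icc rs r2)) (Icc rs r2) t
        + (2 / t + d2 t) * derivWithin X (Icc rs r2) t
        - (lam / (4 * t ^ 2)) * X t - a0 * a1 * d4 t * X rs = 0)
    (hbc1 : derivWithin X (Icc rs r2) rs - a4 * X rs = 0)
    (hbc2 : derivWithin X (Icc rs r2) r2 = 0) :
    ∀ t ∈ Icc rs r2, X t = 0 := by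
  set I := Icc rs r2
  have ht0 : ∀ t ∈ I, t ≠ 0 := fun t ht => (hrs.trans_le ht.1).ne'
  obtain ⟨p, hp, hp'⟩ := exists_integratingFactor (g := fun t => (2 / t + d2 t) / d1 t) hr.le
    (((continuousOn_const.div continuousOn_id ht0).add hd2c).div hd1c fun t ht => (hd1 t ht).ne')
  have hX' : ContDiffOn ℝ 1 (derivWithin X I) I :=
    hX.derivWithin (uniqueDiffOn_Icc hr) (by norm_num)
  have hderiv {f : ℝ → ℝ} (hf : DifferentiableOn ℝ f I) (t : ℝ) (ht : t ∈ Ioo rs r2) :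
      HasDerivAt f (derivWithin f I t) t :=
    (hf t (Ioo_subset_Icc_self ht)).hasDerivWithinAt.hasDerivAt (Icc_mem_nhds ht.1 ht.2)
  have hflux : FluxForm rs r2 X (derivWithin X I) p (fun t => p t * (lam / (4 * t ^ 2)) / d1 t)
      (fun t => p t * (a0 * a1 * d4 t) / d1 t) := by
    refine ⟨hX.continuousOn, hderiv (hX.differentiableOn (by norm_num)), fun t _ => hp t,
      ContinuousOn.mul (fun t ht => (hp' t ht).continuousAt.continuousWithinAt) hX'.continuousOn,
      fun t ht => ?_⟩
    have htI := Ioo_subset_Icc_self ht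
    have hd1t := (hd1 t htI).ne'
    refine ((hp' t htI).mul_of_add_mul_eq (hderiv (hX'.differentiableOn one_ne_zero) t ht)
      (F := (lam / (4 * t ^ 2) * X t + a0 * a1 * d4 t * X rs) / d1 t) ?_).congr_deriv (by ring)
    rw [eq_div_iff hd1t, add_mul, mul_right_comm, div_mul_cancel₀ _ hd1t]
    linarith [heq t htI]
  refine hflux.eq_zero_of_robin_neumann hr (fun t ht => ?_) (fun t ht => ?_) ha4 (by linarith)
    hbc2
  · have := hp t
    have := hd1 t (Ioo_subset_Icc_self ht)
    positivity
  · exact div_nonneg (mul_nonneg (hp t).le (mul_nonneg ha01 (hd4 t (Ioo_subset_Icc_self ht))))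
      (hd1 t (Ioo_subset_Icc_self ht)).le

/-- uniqueness for the nonlocal second-order ODE with oblique boundary
conditions arising from the Fourier modes of the potential-function problem. -/
theorem nonlocal_ode_uniqueness (rs r2 a0 a1 a4 lam : ℝ) (d1 d2 d4 : ℝ → ℝ) (X : ℝ → ℝ)
    (hrs : 0 < rs) (hr : rs < r2)
    (hd1c : ContinuousOn d1 (Icc rs r2)) (hd2c : ContinuousOn d2 (Icc rs r2))
    (hd4c : ContinuousOn d4 (Icc rs r2))
    (hd1 : ∀ t ∈ Icc rs r2, 0 < d1 t) (hd4 : ∀ t ∈ Icc rs r2, 0 ≤ d4 t)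
    (hlam : 0 ≤ lam) (ha4 : 0 < a4) (ha01 : 0 ≤ a0 * a1)
    (hX : ContDiffOn ℝ 2 X (Icc rs r2))
    (heq : ∀ t ∈ Icc rs r2,
      d1 t * derivWithin (derivWithin X (Icc rs r2)) (Icc rs r2) t
        + (2 / t + d2 t) * derivWithin X (Icc rs r2) t
        - (lam / (4 * t ^ 2)) * X t - a0 * a1 * d4 t * X rs = 0)
    (hbc1 : derivWithin X (Icc rs r2) rs - a4 * X rs = 0)
    (hbc2 : derivWithin X (Icc rs r2) r2 = 0) :
    ∀ t ∈ Icc rs r2, X t = 0 :=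
  nonlocal_ode_uniqueness_general rs r2 a0 a1 a4 lam d1 d2 d4 X hrs hr hd1c hd2c hd1 hd4 hlam ha4
    ha01 hX heq hbc1 hbc2
end
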